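/- For a Dirichlet-distributed vector X ~ Dir(α) and nonnegative integers k₁,…,k_N, the mixed moment satisfies E[∏ᵢ Xᵢ^{kᵢ}] = (Γ(‖α‖₁) / Γ(‖α‖₁ + ‖k‖₁)) ∏ᵢ Γ(αᵢ + kᵢ)/Γ(αᵢ). -/

import Mathlib

/-!
Multiplying the Dirichlet density by `∏ xᵢ ^ kᵢ` turns the kernel `∏ xᵢ ^ (αᵢ - 1)` into the
kernel for the parameters `α + k`, so the moment is a ratio of two normalising constants. These
are given by Dirichlet's integral `∫_Δ ∏ xᵢ ^ (βᵢ - 1) = ∏ Γ(βᵢ) / Γ(∑ βᵢ)`, proved by induction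
on the dimension: with the free coordinates `(t, z)` and `s = 1 - ∑ z`, the integral over `t`
is the scaled Beta integral
`∫₀ˢ t ^ (β₀ - 1) (s - t) ^ (β_N - 1) dt = s ^ (β₀ + β_N - 1) B(β₀, β_N)`,
which leaves the kernel in `z` for the parameters with `β₀` and `β_N` merged into one.
-/

open MeasureTheory

noncomputable section

/-- Parametrization of the standard simplex in `ℝ^{N}` (`N = n+1`) by its first `n`
coordinates: the last coordinate is `1 - Σᵢ yᵢ`. -/
def simplexEmbed (n : ℕ) (y : Fin n → ℝ) : Fin (n + 1) → ℝ :=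
  fun i => if h : (i : ℕ) < n then y ⟨i, h⟩ else 1 - ∑ j, y j

/-- The density of the Dirichlet distribution `Dir(α)` with respect to Lebesgue
measure on `ℝ^n` (the simplex being parametrized by its first `n` coordinates):
`f(x) = (Γ(‖α‖₁) / ∏ᵢ Γ(αᵢ)) ∏ᵢ xᵢ^(αᵢ−1)` on the simplex, and `0` outside. -/
def dirichletDensity {n : ℕ} (α : Fin (n + 1) → ℝ) (y : Fin n → ℝ) : ℝ :=
  if ∀ i, 0 ≤ simplexEmbed n y i then
    (Real.Gamma (∑ i, α i) / ∏ i, Real.Gamma (α i)) *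
      ∏ i, (simplexEmbed n y i) ^ (α i - 1)
  else 0

/-- The Dirichlet distribution `Dir(α)` as a measure on `Fin (n+1) → ℝ`, supported
on the standard simplex `{x : xᵢ ≥ 0, Σ xᵢ = 1}`. -/
def dirichlet {n : ℕ} (α : Fin (n + 1) → ℝ) : Measure (Fin (n + 1) → ℝ) :=
  Measure.map (simplexEmbed n)
    ((volume : Measure (Fin n → ℝ)).withDensity
      (fun y => ENNReal.ofReal (dirichletDensity α y)))

open Real ProbabilityTheory
open scoped ENNReal

@[to_additive]
theorem Fin.prod_univ_eq_first_mul_mid_mul_last {M : Type*} [CommMonoid M] {n : ℕ}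
    (f : Fin (n + 2) → M) :
    ∏ i, f i = f 0 * (∏ i : Fin n, f i.succ.castSucc) * f (Fin.last (n + 1)) := by
  rw [Fin.prod_univ_succ, Fin.prod_univ_castSucc, mul_assoc, Fin.succ_last]
  simp only [Fin.succ_castSucc]

theorem Real.rpow_sub_one_mul_pow {x a : ℝ} (hx : 0 ≤ x) (ha : 0 < a) (k : ℕ) :
    x ^ (a - 1) * x ^ k = x ^ (a + k - 1) := by
  rcases Nat.eq_zero_or_pos k with rfl | hk
  · simp
  · rw [add_sub_right_comm, rpow_add_natCast' hx]
    have : (1 : ℝ) ≤ k := Nat.one_le_cast.2 hk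
    linarith

theorem integral_rpow_mul_rpow_sub_eq_beta {u v s : ℝ} (hu : 0 < u) (hv : 0 < v) (hs : 0 < s) :
    ∫ t in (0 : ℝ)..s, t ^ (u - 1) * (s - t) ^ (v - 1) = s ^ (u + v - 1) * beta u v := by
  have h := Complex.betaIntegral_scaled u v hs
  rw [Complex.betaIntegral_eq_Gamma_mul_div _ _ (by simpa) (by simpa)] at h
  apply Complex.ofReal_injective
  rw [← intervalIntegral.integral_ofReal]
  convert h using 1
  · refine intervalIntegral.integral_congr fun t ht => ?_
    rw [Set.uIcc_of_le hs.le] at ht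
    push_cast
    rw [Complex.ofReal_cpow ht.1, Complex.ofReal_cpow (sub_nonneg.2 ht.2)]
    push_cast; rfl
  · rw [beta, ← Complex.ofReal_add, Complex.Gamma_ofReal, Complex.Gamma_ofReal,
      Complex.Gamma_ofReal, Complex.ofReal_mul, Complex.ofReal_cpow hs.le]
    push_cast; rfl

theorem lintegral_Icc_rpow_mul_rpow_sub_eq_beta {u v s : ℝ} (hu : 0 < u) (hv : 0 < v)
    (hs : 0 < s) :
    ∫⁻ t in Set.Icc 0 s, ENNReal.ofReal (t ^ (u - 1) * (s - t) ^ (v - 1))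
      = ENNReal.ofReal (s ^ (u + v - 1) * beta u v) := by
  have h := integral_rpow_mul_rpow_sub_eq_beta hu hv hs
  rw [intervalIntegral.integral_of_le hs.le] at h
  have hpos : 0 < s ^ (u + v - 1) * beta u v := mul_pos (rpow_pos_of_pos hs _) (beta_pos hu hv)
  rw [Measure.restrict_congr_set Ioc_ae_eq_Icc.symm, ← h, ofReal_integral_eq_lintegral_ofReal]
  · exact Integrable.of_integral_ne_zero (h ▸ hpos.ne')
  · refine (ae_restrict_iff' measurableSet_Ioc).2 (Filter.Eventually.of_forall fun t ht => ?_)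
    exact mul_nonneg (rpow_nonneg ht.1.le _) (rpow_nonneg (sub_nonneg.2 ht.2) _)

theorem lintegral_fin_cons {n : ℕ} {f : (Fin (n + 1) → ℝ) → ℝ≥0∞} (hf : Measurable f) :
    ∫⁻ y, f y = ∫⁻ z : Fin n → ℝ, ∫⁻ t : ℝ, f (Fin.cons t z) := by
  rw [volume_pi, ← ((measurePreserving_piFinSuccAbove (fun _ => volume) 0).symm).lintegral_comp hf,
    lintegral_prod_symm' (fun p => f _) (hf.comp (MeasurableEquiv.measurable _))]
  simp only [MeasurableEquiv.piFinSuccAbove_symm_apply, Fin.insertNthEquiv_zero, volume_pi]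
  rfl

theorem volume_setOf_sum_eq_one (n : ℕ) : volume {y : Fin n → ℝ | ∑ j, y j = 1} = 0 := by
  let H : AffineSubspace ℝ (Fin n → ℝ) :=
    { carrier := {y | ∑ j, y j = 1}
      smul_vsub_vadd_mem' := fun c p₁ p₂ p₃ h₁ h₂ h₃ => by
        simp_all [Finset.sum_add_distrib, Finset.sum_sub_distrib, ← Finset.mul_sum] }
  refine Measure.addHaar_affineSubspace volume H fun hH => ?_
  have : (0 : Fin n → ℝ) ∈ H := hH ▸ AffineSubspace.mem_top ℝ _ 0
  change ∑ j, (0 : Fin n → ℝ) j = 1 at this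
  simp at this

section Dirichlet

variable {n : ℕ}

@[simp]
theorem simplexEmbed_castSucc (y : Fin n → ℝ) (i : Fin n) :
    simplexEmbed n y i.castSucc = y i := by
  simp [simplexEmbed]

@[simp]
theorem simplexEmbed_last (y : Fin n → ℝ) : simplexEmbed n y (Fin.last n) = 1 - ∑ j, y j := by
  simp [simplexEmbed]

theorem simplexEmbed_nonneg_iff {y : Fin n → ℝ} :
    (∀ i, 0 ≤ simplexEmbed n y i) ↔ (∀ j, 0 ≤ y j) ∧ ∑ j, y j ≤ 1 := by
  simp [Fin.forall_fin_succ', sub_nonneg]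

theorem measurable_simplexEmbed : Measurable (simplexEmbed n) := by
  refine measurable_pi_lambda _ fun i => Fin.lastCases ?_ (fun j => ?_) i
  · simp only [simplexEmbed_last]
    fun_prop
  · simpa using measurable_pi_apply j

def dirichletKernel (β : Fin (n + 1) → ℝ) (y : Fin n → ℝ) : ℝ :=
  if ∀ i, 0 ≤ simplexEmbed n y i then ∏ i, simplexEmbed n y i ^ (β i - 1) else 0

theorem dirichletKernel_nonneg (β : Fin (n + 1) → ℝ) (y : Fin n → ℝ) :
    0 ≤ dirichletKernel β y := by
  unfold dirichletKernel
  split_ifs with h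
  · exact Finset.prod_nonneg fun i _ => rpow_nonneg (h i) _
  · exact le_rfl

theorem measurable_dirichletKernel (β : Fin (n + 1) → ℝ) : Measurable (dirichletKernel β) := by
  have hcoord (i : Fin (n + 1)) : Measurable fun y => simplexEmbed n y i :=
    (measurable_pi_apply i).comp measurable_simplexEmbed
  refine Measurable.ite ?_ (Finset.measurable_prod _ fun i _ => (hcoord i).pow_const _)
    measurable_const
  exact measurableSet_setOfPred.2 <| Measurable.forall fun i =>
    measurableSet_setOfPred.1 (measurableSet_le measurable_const (hcoord i))

theorem dirichletKernel_of_neg {β : Fin (n + 1) → ℝ} {y : Fin n → ℝ} {j : Fin n}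
    (hj : y j < 0) : dirichletKernel β y = 0 :=
  if_neg fun h => (h j.castSucc).not_gt (by simpa using hj)

theorem dirichletKernel_of_one_lt_sum {β : Fin (n + 1) → ℝ} {y : Fin n → ℝ}
    (hy : 1 < ∑ j, y j) : dirichletKernel β y = 0 :=
  if_neg fun h => (h (Fin.last n)).not_gt (by simpa using hy)

theorem dirichletDensity_eq_mul_dirichletKernel (α : Fin (n + 1) → ℝ) (y : Fin n → ℝ) :
    dirichletDensity α y
      = (Gamma (∑ i, α i) / ∏ i, Gamma (α i)) * dirichletKernel α y := by
  rw [dirichletDensity, dirichletKernel, mul_ite, mul_zero]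

theorem dirichletKernel_mul_prod_pow {α : Fin (n + 1) → ℝ} (hα : ∀ i, 0 < α i)
    (k : Fin (n + 1) → ℕ) (y : Fin n → ℝ) :
    dirichletKernel α y * ∏ i, simplexEmbed n y i ^ k i
      = dirichletKernel (fun i => α i + k i) y := by
  unfold dirichletKernel
  split_ifs with h
  · rw [← Finset.prod_mul_distrib]
    exact Finset.prod_congr rfl fun i _ => rpow_sub_one_mul_pow (h i) (hα i) (k i)
  · rw [zero_mul]

def mergeFirstLast (β : Fin (n + 2) → ℝ) : Fin (n + 1) → ℝ :=
  Fin.snoc (fun i : Fin n => β i.succ.castSucc) (β 0 + β (Fin.last (n + 1)))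

theorem prod_comp_mergeFirstLast {M : Type*} [CommMonoid M] (f : ℝ → M)
    (β : Fin (n + 2) → ℝ) :
    ∏ i, f (mergeFirstLast β i)
      = (∏ i : Fin n, f (β i.succ.castSucc)) * f (β 0 + β (Fin.last (n + 1))) := by
  simp [mergeFirstLast, Fin.prod_univ_castSucc]

theorem sum_mergeFirstLast (β : Fin (n + 2) → ℝ) : ∑ i, mergeFirstLast β i = ∑ i, β i := by
  rw [Fin.sum_univ_eq_first_add_mid_add_last, Fin.sum_univ_castSucc]
  simp only [mergeFirstLast, Fin.snoc_castSucc, Fin.snoc_last]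
  ring

theorem mergeFirstLast_pos {β : Fin (n + 2) → ℝ} (hβ : ∀ i, 0 < β i) (i : Fin (n + 1)) :
    0 < mergeFirstLast β i := by
  refine Fin.lastCases ?_ (fun j => ?_) i
  · simpa [mergeFirstLast] using add_pos (hβ 0) (hβ (Fin.last (n + 1)))
  · simpa [mergeFirstLast] using hβ _

theorem beta_mul_prod_Gamma_mergeFirstLast_div {β : Fin (n + 2) → ℝ} (hβ : ∀ i, 0 < β i) :
    beta (β 0) (β (Fin.last (n + 1)))
        * ((∏ i, Gamma (mergeFirstLast β i)) / Gamma (∑ i, mergeFirstLast β i))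
      = (∏ i, Gamma (β i)) / Gamma (∑ i, β i) := by
  have hne : Gamma (β 0 + β (Fin.last (n + 1))) ≠ 0 :=
    (Gamma_pos_of_pos (add_pos (hβ 0) (hβ _))).ne'
  rw [sum_mergeFirstLast, prod_comp_mergeFirstLast, Fin.prod_univ_eq_first_mul_mid_mul_last, beta]
  field_simp

theorem dirichletKernel_cons (β : Fin (n + 2) → ℝ) (t : ℝ) {z : Fin n → ℝ}
    (hz : ∀ j, 0 ≤ z j) :
    dirichletKernel β (Fin.cons t z)
      = (∏ i : Fin n, z i ^ (β i.succ.castSucc - 1)) * (Set.Icc 0 (1 - ∑ j, z j)).indicator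
          (fun t => t ^ (β 0 - 1) * (1 - ∑ j, z j - t) ^ (β (Fin.last (n + 1)) - 1)) t := by
  have hcond : (∀ i, 0 ≤ simplexEmbed (n + 1) (Fin.cons t z) i)
      ↔ t ∈ Set.Icc 0 (1 - ∑ j, z j) := by
    simp [simplexEmbed_nonneg_iff, Fin.forall_fin_succ, Fin.sum_cons, hz, le_sub_iff_add_le]
  unfold dirichletKernel
  by_cases ht : t ∈ Set.Icc 0 (1 - ∑ j, z j)
  · rw [if_pos (hcond.2 ht), Set.indicator_of_mem ht, Fin.prod_univ_eq_first_mul_mid_mul_last]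
    have h0 : simplexEmbed (n + 1) (Fin.cons t z) 0 = t := simplexEmbed_castSucc _ 0
    simp only [h0, simplexEmbed_castSucc, Fin.cons_succ, simplexEmbed_last, Fin.sum_cons,
      sub_add_eq_sub_sub_swap]
    ring
  · rw [if_neg (hcond.not.2 ht), Set.indicator_of_notMem ht, mul_zero]

theorem dirichletKernel_mergeFirstLast (β : Fin (n + 2) → ℝ) {z : Fin n → ℝ}
    (hz : ∀ j, 0 ≤ z j) (hs : ∑ j, z j ≤ 1) :
    dirichletKernel (mergeFirstLast β) z
      = (∏ i : Fin n, z i ^ (β i.succ.castSucc - 1))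
          * (1 - ∑ j, z j) ^ (β 0 + β (Fin.last (n + 1)) - 1) := by
  rw [dirichletKernel, if_pos (simplexEmbed_nonneg_iff.2 ⟨hz, hs⟩), Fin.prod_univ_castSucc]
  simp [mergeFirstLast]

theorem lintegral_dirichletKernel_cons {β : Fin (n + 2) → ℝ} (hβ : ∀ i, 0 < β i)
    {z : Fin n → ℝ} (hz : ∑ j, z j ≠ 1) :
    ∫⁻ t, ENNReal.ofReal (dirichletKernel β (Fin.cons t z))
      = ENNReal.ofReal (beta (β 0) (β (Fin.last (n + 1))))
          * ENNReal.ofReal (dirichletKernel (mergeFirstLast β) z) := by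
  by_cases hneg : ∃ j, z j < 0
  · obtain ⟨j, hj⟩ := hneg
    have hcons (t : ℝ) : dirichletKernel β (Fin.cons t z) = 0 :=
      dirichletKernel_of_neg (j := j.succ) (by simpa using hj)
    simp [dirichletKernel_of_neg hj, hcons]
  push Not at hneg
  rcases lt_or_gt_of_ne hz with hlt | hgt
  · simp_rw [dirichletKernel_cons β _ hneg, dirichletKernel_mergeFirstLast β hneg hlt.le,
      ENNReal.ofReal_mul (Finset.prod_nonneg fun i _ => rpow_nonneg (hneg i) _)]
    set s := 1 - ∑ j, z j
    have hs : 0 < s := sub_pos.2 hlt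
    have hind (f : ℝ → ℝ) (t : ℝ) : ENNReal.ofReal ((Set.Icc 0 s).indicator f t)
        = (Set.Icc 0 s).indicator (fun t => ENNReal.ofReal (f t)) t :=
      (congr_fun (Set.indicator_comp_of_zero ENNReal.ofReal_zero) t).symm
    simp_rw [hind]
    rw [lintegral_const_mul' _ _ ENNReal.ofReal_ne_top, lintegral_indicator measurableSet_Icc,
      lintegral_Icc_rpow_mul_rpow_sub_eq_beta (hβ 0) (hβ _) hs,
      ENNReal.ofReal_mul (rpow_nonneg hs.le _)]
    ring
  · simp [dirichletKernel_of_one_lt_sum hgt, dirichletKernel_cons β _ hneg,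
      Set.Icc_eq_empty_of_lt (sub_neg.2 hgt)]

theorem lintegral_dirichletKernel (β : Fin (n + 1) → ℝ) (hβ : ∀ i, 0 < β i) :
    ∫⁻ y, ENNReal.ofReal (dirichletKernel β y)
      = ENNReal.ofReal ((∏ i, Gamma (β i)) / Gamma (∑ i, β i)) := by
  induction n with
  | zero =>
    have hK (y : Fin 0 → ℝ) : dirichletKernel β y = 1 := by
      rw [dirichletKernel, if_pos (simplexEmbed_nonneg_iff.2 ⟨finZeroElim, by simp⟩),
        Fin.prod_univ_one, ← Fin.last_zero, simplexEmbed_last]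
      simp
    simp [hK, (Gamma_pos_of_pos (hβ 0)).ne', volume_pi]
  | succ n ih =>
    -- on `∑ z = 1` the `t`-integral vanishes, but the merged kernel can be `0 ^ 0 = 1`
    have hae : ∀ᵐ z : Fin n → ℝ, ∑ j, z j ≠ 1 :=
      ae_iff.2 (by simpa using volume_setOf_sum_eq_one n)
    rw [lintegral_fin_cons (measurable_dirichletKernel β).ennreal_ofReal,
      lintegral_congr_ae (hae.mono fun z hz => lintegral_dirichletKernel_cons hβ hz),
      lintegral_const_mul' _ _ ENNReal.ofReal_ne_top, ih _ (mergeFirstLast_pos hβ),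
      ← ENNReal.ofReal_mul (beta_pos (hβ 0) (hβ _)).le,
      beta_mul_prod_Gamma_mergeFirstLast_div hβ]

theorem integral_dirichletKernel (β : Fin (n + 1) → ℝ) (hβ : ∀ i, 0 < β i) :
    ∫ y, dirichletKernel β y = (∏ i, Gamma (β i)) / Gamma (∑ i, β i) := by
  rw [integral_eq_lintegral_of_nonneg_ae (ae_of_all _ (dirichletKernel_nonneg β))
    (measurable_dirichletKernel β).aestronglyMeasurable, lintegral_dirichletKernel β hβ,
    ENNReal.toReal_ofReal]
  exact div_nonneg (Finset.prod_nonneg fun i _ => (Gamma_pos_of_pos (hβ i)).le)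
    (Gamma_pos_of_pos (Finset.sum_pos (fun i _ => hβ i) Finset.univ_nonempty)).le

theorem integral_prod_pow_dirichlet {α : Fin (n + 1) → ℝ} (hα : ∀ i, 0 < α i)
    (k : Fin (n + 1) → ℕ) :
    ∫ x, ∏ i, x i ^ k i ∂dirichlet α
      = (Gamma (∑ i, α i) / ∏ i, Gamma (α i)) * ∫ y, dirichletKernel (fun i => α i + k i) y := by
  have hC : 0 ≤ Gamma (∑ i, α i) / ∏ i, Gamma (α i) :=
    div_nonneg (Gamma_pos_of_pos (Finset.sum_pos (fun i _ => hα i) Finset.univ_nonempty)).le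
      (Finset.prod_nonneg fun i _ => (Gamma_pos_of_pos (hα i)).le)
  have hdensity : Measurable (dirichletDensity α) := by
    simp_rw [funext (dirichletDensity_eq_mul_dirichletKernel α)]
    exact (measurable_dirichletKernel α).const_mul _
  have hmonomial : Measurable fun x : Fin (n + 1) → ℝ => ∏ i, x i ^ k i :=
    Finset.measurable_prod _ fun i _ => (measurable_pi_apply i).pow_const _
  rw [dirichlet, integral_map measurable_simplexEmbed.aemeasurable hmonomial.aestronglyMeasurable,
    integral_withDensity_eq_integral_toReal_smul hdensity.ennreal_ofReal
      (ae_of_all _ fun _ => ENNReal.ofReal_lt_top), ← integral_const_mul]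
  congr 1 with y
  rw [dirichletDensity_eq_mul_dirichletKernel, ENNReal.toReal_ofReal
    (mul_nonneg hC (dirichletKernel_nonneg α y)), smul_eq_mul, mul_assoc,
    dirichletKernel_mul_prod_pow hα]

end Dirichlet

/-- Mixed moments of the Dirichlet distribution: for `X ~ Dir(α)` and nonnegative
integers `k₁,…,k_N`,
`E[∏ᵢ Xᵢ^{kᵢ}] = (Γ(‖α‖₁)/Γ(‖α‖₁+‖k‖₁)) ∏ᵢ Γ(αᵢ+kᵢ)/Γ(αᵢ)`. -/
theorem stmt6 {n : ℕ} (α : Fin (n + 1) → ℝ) (hα : ∀ i, 0 < α i)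
    (k : Fin (n + 1) → ℕ) :
    ∫ x, ∏ i, (x i) ^ (k i) ∂(dirichlet α)
      = Real.Gamma (∑ i, α i) / Real.Gamma ((∑ i, α i) + ∑ i, (k i : ℝ)) *
          ∏ i, Real.Gamma (α i + k i) / Real.Gamma (α i) := by
  have hαk (i : Fin (n + 1)) : 0 < α i + k i := add_pos_of_pos_of_nonneg (hα i) (Nat.cast_nonneg _)
  rw [integral_prod_pow_dirichlet hα, integral_dirichletKernel _ hαk, Finset.sum_add_distrib,
    Finset.prod_div_distrib]
  ring

end
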